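/- For any finite simple graph H and m,n ≥ 1, π(K_{m,n} ∘ H) = π(H) + min{m,n}·|V(H)|. -/

import Mathlib

/-- A list is a repetition if it is of the form `w ++ w` for a nonempty `w`. -/
def IsRepetition {α : Type*} (l : List α) : Prop := ∃ w : List α, w ≠ [] ∧ l = w ++ w

/-- A list is non-repetitive if no block of consecutive elements is a repetition. -/
def NonRepetitive {α : Type*} (l : List α) : Prop :=
  ∀ t : List α, t <:+: l → ¬ IsRepetition t

/-- A vertex colouring is non-repetitive if the colour sequence of every path
is not a repetition. -/
def NonRepColoring {V β : Type*} (G : SimpleGraph V) (φ : V → β) : Prop :=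
  ∀ ⦃u v : V⦄ (p : G.Walk u v), p.IsPath → ¬ IsRepetition (p.support.map φ)

/-- The Thue chromatic number: minimum number of colours of a non-repetitive colouring. -/
noncomputable def thueNumber {V : Type*} [Fintype V] (G : SimpleGraph V) : ℕ :=
  sInf {k | ∃ φ : V → Fin k, NonRepColoring G φ}

/-- The Thue choice number: least `k` such that from any lists of size at least `k`
one can choose a non-repetitive colouring. -/
noncomputable def thueChoiceNumber {V : Type*} [Fintype V] (G : SimpleGraph V) : ℕ :=
  sInf {k | ∀ L : V → Finset ℕ, (∀ v, k ≤ (L v).card) →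
    ∃ φ : V → ℕ, (∀ v, φ v ∈ L v) ∧ NonRepColoring G φ}

/-- The independence number of a graph. -/
noncomputable def indepNum {V : Type*} [Fintype V] (G : SimpleGraph V) : ℕ :=
  sSup {n | ∃ s : Finset V, (∀ a ∈ s, ∀ b ∈ s, ¬ G.Adj a b) ∧ s.card = n}

/-- The lexicographic product of two simple graphs. -/
def lexProd {V W : Type*} (G : SimpleGraph V) (H : SimpleGraph W) : SimpleGraph (V × W) where
  Adj x y := G.Adj x.1 y.1 ∨ (x.1 = y.1 ∧ H.Adj x.2 y.2)
  symm := by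
    constructor
    rintro x y (h | ⟨h1, h2⟩)
    · exact Or.inl h.symm
    · exact Or.inr ⟨h1.symm, h2.symm⟩
  loopless := by
    constructor
    rintro x (h | ⟨h1, h2⟩)
    · exact G.loopless.irrefl _ h
    · exact H.loopless.irrefl _ h2

/-! Colour the vertices `(a, w)` of the smaller side `A` of `K_{A,B}` with pairwise distinct colours
and every copy `{b} × H`, `b ∈ B`, with one optimal non-repetitive colouring of `H`. In a repetitive
colour sequence every colour occurs twice, so a repetitive path avoids the rainbow part; inside
`B × W` it cannot leave a copy of `H`, whose colouring is non-repetitive. Conversely, in a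
non-repetitive colouring of `K_{A,B} ∘ H` one of the two sides is rainbow, since otherwise two
repeated colours on each side give a repetitive path `u v u' v'`; every copy of `H` on the other
side needs colours distinct from the rainbow side, as all of its vertices are adjacent to it. -/

open SimpleGraph Function

theorem IsRepetition.map {α β : Type*} {l : List α} (f : α → β) (h : IsRepetition l) :
    IsRepetition (l.map f) := by
  obtain ⟨w, hw, rfl⟩ := h
  exact ⟨w.map f, by simpa using hw, by simp⟩

theorem IsRepetition.of_map {α β : Type*} {l : List α} {f : α → β} (hf : Injective f)
    (h : IsRepetition (l.map f)) : IsRepetition l := by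
  obtain ⟨w, hw, hl⟩ := h
  have htake : (l.take w.length).map f = w := by rw [List.map_take, hl, List.take_left]
  have hdrop : (l.drop w.length).map f = w := by rw [List.map_drop, hl, List.drop_left]
  refine ⟨l.take w.length, fun h0 => hw (by rw [← htake, h0, List.map_nil]), ?_⟩
  nth_rw 2 [List.map_injective_iff.mpr hf (htake.trans hdrop.symm)]
  exact (l.take_append_drop w.length).symm

theorem IsRepetition.exists_ne_apply_eq {α β : Type*} {l : List α} {f : α → β}
    (h : IsRepetition (l.map f)) (hl : l.Nodup) {x : α} (hx : x ∈ l) :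
    ∃ y ∈ l, y ≠ x ∧ f y = f x := by
  obtain ⟨w, -, hw⟩ := h
  have htake : (l.take w.length).map f = w := by rw [List.map_take, hw, List.take_left]
  have hdrop : (l.drop w.length).map f = w := by rw [List.map_drop, hw, List.drop_left]
  rw [← l.take_append_drop w.length] at hl hx ⊢
  have hdisj := List.disjoint_of_nodup_append hl
  rcases List.mem_append.mp hx with hx | hx
  · obtain ⟨y, hy, hyx⟩ := List.mem_map.mp (hdrop ▸ htake ▸ List.mem_map_of_mem hx : f x ∈ _)
    exact ⟨y, List.mem_append_right _ hy, fun h => hdisj hx (h ▸ hy), hyx⟩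
  · obtain ⟨y, hy, hyx⟩ := List.mem_map.mp (htake ▸ hdrop ▸ List.mem_map_of_mem hx : f x ∈ _)
    exact ⟨y, List.mem_append_left _ hy, fun h => hdisj (h ▸ hy) hx, hyx⟩

section NonRepColoring

variable {V V' β γ : Type*} {G : SimpleGraph V} {G' : SimpleGraph V'} {φ : V → β}

theorem NonRepColoring.comp_injective {g : β → γ} (hg : Injective g) (h : NonRepColoring G φ) :
    NonRepColoring G (g ∘ φ) :=
  fun _ _ p hp hr => h p hp (IsRepetition.of_map hg (by rwa [List.map_map]))

theorem NonRepColoring.of_comp {g : β → γ} (h : NonRepColoring G (g ∘ φ)) :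
    NonRepColoring G φ :=
  fun _ _ p hp hr => h p hp (by simpa [List.map_map] using hr.map g)

theorem nonRepColoring_of_injective (hφ : Injective φ) : NonRepColoring G φ := by
  rintro _ _ p hp ⟨w, hw, hl⟩
  have hnd := hp.support_nodup.map hφ
  rw [hl] at hnd
  obtain ⟨a, ha⟩ := List.exists_mem_of_ne_nil w hw
  exact List.disjoint_of_nodup_append hnd ha ha

theorem NonRepColoring.ne_of_adj (h : NonRepColoring G φ) {u v : V} (huv : G.Adj u v) :
    φ u ≠ φ v := fun he =>
  h (Walk.cons huv Walk.nil) (by simp [Walk.isPath_def, G.ne_of_adj huv])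
    ⟨[φ u], by simp, by simp [he]⟩

theorem NonRepColoring.comp_embedding {φ : V' → β} (h : NonRepColoring G' φ) (f : G ↪g G') :
    NonRepColoring G (φ ∘ f) := fun _ _ p hp hr =>
  h (p.map f.toHom) (hp.map f.injective) (by rwa [Walk.support_map, List.map_map])

end NonRepColoring

section thueNumber

variable {V β : Type*} [Fintype V] {G : SimpleGraph V}

theorem exists_nonRepColoring_thueNumber (G : SimpleGraph V) :
    ∃ φ : V → Fin (thueNumber G), NonRepColoring G φ :=
  Nat.sInf_mem (s := {k | ∃ φ : V → Fin k, NonRepColoring G φ})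
    ⟨_, Fintype.equivFin V, nonRepColoring_of_injective (Fintype.equivFin V).injective⟩

theorem NonRepColoring.thueNumber_le [Fintype β] {φ : V → β} (h : NonRepColoring G φ) :
    thueNumber G ≤ Fintype.card β :=
  Nat.sInf_le ⟨Fintype.equivFin β ∘ φ, h.comp_injective (Fintype.equivFin β).injective⟩

theorem NonRepColoring.thueNumber_le_card {φ : V → β} (h : NonRepColoring G φ) {T : Finset β}
    (hT : ∀ v, φ v ∈ T) : thueNumber G ≤ T.card := by
  have hT' : NonRepColoring G fun v => (⟨φ v, hT v⟩ : T) :=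
    NonRepColoring.of_comp (g := Subtype.val) h
  simpa using hT'.thueNumber_le

end thueNumber

section lexProd

variable {V W A β : Type*} {G : SimpleGraph V} {H : SimpleGraph W}

variable (G H) in
def lexProdFiberEmbedding (v : V) : H ↪g lexProd G H where
  toFun w := (v, w)
  inj' _ _ h := (Prod.mk.inj h).2
  map_rel_iff' {a b} := by
    change G.Adj v v ∨ (v = v ∧ H.Adj a b) ↔ H.Adj a b
    simp

theorem SimpleGraph.Walk.exists_support_eq_map_of_isIndepSet {I : Set V} (hI : G.IsIndepSet I)
    {x y : V × W} (p : (lexProd G H).Walk x y) (hp : ∀ z ∈ p.support, z.1 ∈ I) :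
    ∃ q : H.Walk x.2 y.2, p.support = q.support.map (x.1, ·) := by
  induction p with
  | nil => exact ⟨.nil, by simp⟩
  | @cons u c _ hadj p ih =>
    obtain ⟨q, hq⟩ := ih fun z hz => hp z (List.mem_cons_of_mem _ hz)
    have hfst : u.1 = c.1 := by
      have hu := hp u (Walk.start_mem_support _)
      have hc := hp c (List.mem_cons_of_mem _ p.start_mem_support)
      rcases hadj with hG | ⟨he, -⟩
      · exact absurd hG (hI hu hc (G.ne_of_adj hG))
      · exact he
    have hH : H.Adj u.2 c.2 := (hadj.resolve_left (hfst ▸ G.irrefl)).2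
    exact ⟨.cons hH q, by simp [hq, ← hfst]⟩

theorem thueNumber_lexProd_le [Fintype V] [Fintype W] (G : SimpleGraph V) (H : SimpleGraph W)
    (S : Finset V) (hS : G.IsIndepSet (↑S)ᶜ) :
    thueNumber (lexProd G H) ≤ thueNumber H + S.card * Fintype.card W := by
  classical
  obtain ⟨φ, hφ⟩ := exists_nonRepColoring_thueNumber H
  let χ : V × W → Fin (thueNumber H) ⊕ (S × W) := fun x =>
    if h : x.1 ∈ S then .inr (⟨x.1, h⟩, x.2) else .inl (φ x.2)
  have hrainbow : ∀ {z z' : V × W}, z.1 ∈ S → χ z' = χ z → z' = z := by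
    rintro ⟨v, w⟩ ⟨v', w'⟩ hv h
    simp only [χ, dif_pos hv] at h
    split_ifs at h
    simp_all
  have hχ : NonRepColoring (lexProd G H) χ := by
    rintro x y p hp hrep
    have hout : ∀ z ∈ p.support, z.1 ∈ (↑S : Set V)ᶜ := fun z hz hzS => by
      obtain ⟨z', -, hne, hcol⟩ := hrep.exists_ne_apply_eq hp.support_nodup hz
      exact hne (hrainbow hzS hcol)
    obtain ⟨q, hq⟩ := p.exists_support_eq_map_of_isIndepSet hS hout
    have hcol : p.support.map χ = (q.support.map φ).map Sum.inl := by
      rw [hq, List.map_map, List.map_map]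
      have hx : x.1 ∉ S := hout x p.start_mem_support
      exact List.map_congr_left fun w _ => by simp [χ, hx]
    refine hφ q ?_ ((hcol ▸ hrep).of_map Sum.inl_injective)
    exact Walk.isPath_def _ |>.mpr <| (hq ▸ hp.support_nodup).of_map _
  simpa [Fintype.card_sum, Fintype.card_prod] using hχ.thueNumber_le

theorem NonRepColoring.thueNumber_add_le [Fintype W] [Fintype A] [Fintype β] {ψ : V × W → β}
    (hψ : NonRepColoring (lexProd G H) ψ) {f : A → V} {v : V} (hadj : ∀ a, G.Adj (f a) v)
    (hinj : Injective fun p : A × W => ψ (f p.1, p.2)) :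
    thueNumber H + Fintype.card A * Fintype.card W ≤ Fintype.card β := by
  classical
  set R := Finset.univ.image fun p : A × W => ψ (f p.1, p.2)
  have hR : R.card = Fintype.card A * Fintype.card W := by
    rw [Finset.card_image_of_injective _ hinj, Finset.card_univ, Fintype.card_prod]
  have hfiber : ∀ w, ψ (v, w) ∈ Rᶜ := fun w => Finset.mem_compl.mpr fun hw => by
    obtain ⟨p, -, hp⟩ := Finset.mem_image.mp hw
    exact hψ.ne_of_adj (Or.inl (hadj p.1) : (lexProd G H).Adj (f p.1, p.2) (v, w)) hp
  have hH := (hψ.comp_embedding (lexProdFiberEmbedding G H v)).thueNumber_le_card hfiber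
  rw [Finset.card_compl, hR] at hH
  have := R.card_le_univ
  omega

end lexProd

section completeBipartite

variable {A B W β : Type*} {H : SimpleGraph W}

theorem NonRepColoring.injective_inl_or_injective_inr {ψ : (A ⊕ B) × W → β}
    (hψ : NonRepColoring (lexProd (completeBipartiteGraph A B) H) ψ) :
    Injective (fun p : A × W => ψ (.inl p.1, p.2)) ∨
      Injective (fun p : B × W => ψ (.inr p.1, p.2)) := by
  refine or_iff_not_imp_left.mpr fun hA b b' hbb' => by_contra fun hbb => ?_
  obtain ⟨a, a', haa', haa⟩ := not_injective_iff.mp hA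
  let p : (lexProd (completeBipartiteGraph A B) H).Walk (.inl a.1, a.2) (.inr b'.1, b'.2) :=
    .cons (v := (.inr b.1, b.2)) (Or.inl (Or.inl ⟨rfl, rfl⟩)) <|
      .cons (v := (.inl a'.1, a'.2)) (Or.inl (Or.inr ⟨rfl, rfl⟩)) <|
      .cons (Or.inl (Or.inl ⟨rfl, rfl⟩)) .nil
  refine hψ p ?_ ⟨[ψ (.inl a.1, a.2), ψ (.inr b.1, b.2)], by simp, ?_⟩
  · rw [Walk.isPath_def]
    change List.Nodup [_, _, _, _]
    simp [← Prod.ext_iff, haa, hbb]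
  · change [_, _, _, _] = _
    simp [haa', hbb']

theorem completeBipartiteGraph_isIndepSet_compl_map_inl [Fintype A] :
    (completeBipartiteGraph A B).IsIndepSet (↑(Finset.univ.map (Embedding.inl : A ↪ A ⊕ B)))ᶜ := by
  rintro (a | b) ha (a' | b') ha' - <;> simp_all [completeBipartiteGraph]

theorem completeBipartiteGraph_isIndepSet_compl_map_inr [Fintype B] :
    (completeBipartiteGraph A B).IsIndepSet (↑(Finset.univ.map (Embedding.inr : B ↪ A ⊕ B)))ᶜ := by
  rintro (a | b) ha (a' | b') ha' - <;> simp_all [completeBipartiteGraph]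

theorem thueNumber_lexProd_completeBipartite_le [Fintype A] [Fintype B] [Fintype W] :
    thueNumber (lexProd (completeBipartiteGraph A B) H) ≤
      thueNumber H + min (Fintype.card A) (Fintype.card B) * Fintype.card W := by
  rcases le_total (Fintype.card A) (Fintype.card B) with h | h
  · simpa [min_eq_left h] using
      thueNumber_lexProd_le _ H _ completeBipartiteGraph_isIndepSet_compl_map_inl
  · simpa [min_eq_right h] using
      thueNumber_lexProd_le _ H _ completeBipartiteGraph_isIndepSet_compl_map_inr

theorem le_thueNumber_lexProd_completeBipartite [Fintype A] [Fintype B] [Fintype W]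
    [Nonempty A] [Nonempty B] :
    thueNumber H + min (Fintype.card A) (Fintype.card B) * Fintype.card W ≤
      thueNumber (lexProd (completeBipartiteGraph A B) H) := by
  obtain ⟨ψ, hψ⟩ := exists_nonRepColoring_thueNumber (lexProd (completeBipartiteGraph A B) H)
  rcases hψ.injective_inl_or_injective_inr with hinj | hinj
  · calc _ ≤ thueNumber H + Fintype.card A * Fintype.card W := by gcongr; exact min_le_left _ _
      _ ≤ Fintype.card (Fin _) :=
        hψ.thueNumber_add_le (v := .inr (Classical.arbitrary B)) (fun _ => Or.inl ⟨rfl, rfl⟩) hinj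
      _ = _ := Fintype.card_fin _
  · calc _ ≤ thueNumber H + Fintype.card B * Fintype.card W := by gcongr; exact min_le_right _ _
      _ ≤ Fintype.card (Fin _) :=
        hψ.thueNumber_add_le (v := .inl (Classical.arbitrary A)) (fun _ => Or.inr ⟨rfl, rfl⟩) hinj
      _ = _ := Fintype.card_fin _

end completeBipartite

/-- `π(K_{m,n} ∘ H) = π(H) + min{m,n}·|V(H)|`. -/
theorem thueNumber_lexProd_completeBipartite {W : Type*} [Fintype W] (H : SimpleGraph W)
    (m n : ℕ) (hm : 1 ≤ m) (hn : 1 ≤ n) :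
    thueNumber (lexProd (completeBipartiteGraph (Fin m) (Fin n)) H) =
      thueNumber H + min m n * Fintype.card W := by
  have : Nonempty (Fin m) := ⟨⟨0, hm⟩⟩
  have : Nonempty (Fin n) := ⟨⟨0, hn⟩⟩
  simpa using le_antisymm thueNumber_lexProd_completeBipartite_le
    (le_thueNumber_lexProd_completeBipartite (A := Fin m) (B := Fin n) (H := H))
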